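/- Expectation of T₂ under homoscedasticity: let X be an n×p real matrix of full column rank p < n, let P := I_n − X(XᵀX)⁻¹Xᵀ, and let ε₁,…,εₙ be i.i.d. real random variables with distribution symmetric about 0, E ε₁² = 1 and M₄ := E ε₁⁴ < ∞. With residuals ε̂ := Pε, E[ n⁻¹·(Σ_{i=1}^n ε̂ᵢ²)² ] = n⁻¹·( (n−p)² + 2(n−p) + ν₄·tr(P∘P) ), where ν₄ := M₄ − 3. -/

import Mathlib

open MeasureTheory ProbabilityTheory Matrix
open scoped Matrix

/-! Since `P` is symmetric and idempotent, `∑ ε̂ᵢ² = εᵀPε`. Expanding the square,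
`E[(εᵀAε)²] = ∑ A_jk A_lm E[ε_j ε_k ε_l ε_m]`; by independence and symmetry a mixed moment
vanishes as soon as some index occurs an odd number of times, so it equals
`δ_jk δ_lm + δ_jl δ_km + δ_jm δ_kl + ν₄ δ_jklm`. Summing against `A_jk A_lm` gives
`(tr A)² + tr(AAᵀ) + tr(A²) + ν₄ tr(A∘A)`, and for `A = P` both `tr(PPᵀ)` and `tr(P²)` equal
`tr P = n − p`. -/

namespace Matrix

variable {m k R : Type*} [Fintype m] [Fintype k] [DecidableEq k]

theorem isUnit_transpose_mul_self_of_rank_eq [Field R] [LinearOrder R] [IsStrictOrderedRing R]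
    {X : Matrix m k R} (h : X.rank = Fintype.card k) : IsUnit (Xᵀ * X) := by
  have hker : LinearMap.ker X.mulVecLin = ⊥ := by
    have := LinearMap.finrank_range_add_finrank_ker X.mulVecLin
    rw [← rank, h, Module.finrank_fintype_fun_eq_card] at this
    exact Submodule.finrank_eq_zero.mp (by omega)
  rw [← mulVec_injective_iff_isUnit]
  rw [← ker_mulVecLin_transpose_mul_self] at hker
  exact LinearMap.ker_eq_bot.mp hker

variable [CommRing R] {X : Matrix m k R}

theorem isIdempotentElem_hat (h : IsUnit (Xᵀ * X)) :
    IsIdempotentElem (X * (Xᵀ * X)⁻¹ * Xᵀ) := by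
  have hinv := nonsing_inv_mul _ ((isUnit_iff_isUnit_det _).mp h)
  calc X * (Xᵀ * X)⁻¹ * Xᵀ * (X * (Xᵀ * X)⁻¹ * Xᵀ)
      = X * ((Xᵀ * X)⁻¹ * (Xᵀ * X)) * (Xᵀ * X)⁻¹ * Xᵀ := by simp only [Matrix.mul_assoc]
    _ = X * (Xᵀ * X)⁻¹ * Xᵀ := by rw [hinv, Matrix.mul_one]

theorem isSymm_hat : (X * (Xᵀ * X)⁻¹ * Xᵀ).IsSymm := by
  simp [IsSymm, transpose_mul, transpose_nonsing_inv, Matrix.mul_assoc]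

theorem trace_hat (h : IsUnit (Xᵀ * X)) : (X * (Xᵀ * X)⁻¹ * Xᵀ).trace = Fintype.card k := by
  rw [trace_mul_cycle, mul_nonsing_inv _ ((isUnit_iff_isUnit_det _).mp h), trace_one]

end Matrix

section QuadraticForm

open Finset

variable {ι R : Type*} [Fintype ι]

theorem sum_mulVec_sq_of_isSymm [CommSemiring R] {P : Matrix ι ι R} (hsymm : P.IsSymm)
    (hidem : IsIdempotentElem P) (v : ι → R) : ∑ i, (P *ᵥ v) i ^ 2 = v ⬝ᵥ P *ᵥ v := by
  calc ∑ i, (P *ᵥ v) i ^ 2 = v ᵥ* Pᵀ ⬝ᵥ P *ᵥ v := by simp only [vecMul_transpose, dotProduct, sq]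
    _ = v ⬝ᵥ P *ᵥ v := by rw [← dotProduct_mulVec, mulVec_mulVec, hsymm.eq, hidem.eq]

theorem dotProduct_mulVec_eq_sum [CommSemiring R] (A : Matrix ι ι R) (v : ι → R) :
    v ⬝ᵥ A *ᵥ v = ∑ j, ∑ k, A j k * (v j * v k) := by
  simp only [dotProduct, mulVec, mul_sum]
  exact sum_congr rfl fun j _ => sum_congr rfl fun k _ => by ring

theorem sq_dotProduct_mulVec [CommSemiring R] (A : Matrix ι ι R) (v : ι → R) :
    (v ⬝ᵥ A *ᵥ v) ^ 2 = ∑ j, ∑ k, ∑ l, ∑ m, A j k * A l m * (v j * v k * v l * v m) := by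
  simp only [dotProduct_mulVec_eq_sum, sq, sum_mul_sum]
  refine sum_congr rfl fun j _ => ?_
  rw [sum_comm]
  exact sum_congr rfl fun k _ => sum_congr rfl fun l _ => sum_congr rfl fun m _ => by ring

variable [DecidableEq ι]

theorem prod_map_eq_prod_pow_count {M : Type*} [CommMonoid M]
    (s : Multiset ι) (f : ι → M) : (s.map f).prod = ∏ i, f i ^ s.count i := by
  rw [prod_multiset_map_count]
  exact prod_subset (subset_univ _) fun i _ hi => by
    rw [Multiset.count_eq_zero.mpr (by simpa using hi), pow_zero]

/-- The fourth mixed moments `E[ε_a ε_b ε_c ε_d]` of independent, symmetric, standardised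
`εᵢ` with excess kurtosis `ν = E ε⁴ − 3`. -/
def standardFourthMoment [CommRing R] (ν : R) (a b c d : ι) : R :=
  (if a = b then 1 else 0) * (if c = d then 1 else 0)
    + (if a = c then 1 else 0) * (if b = d then 1 else 0)
    + (if a = d then 1 else 0) * (if b = c then 1 else 0)
    + ν * ((if a = b then 1 else 0) * (if a = c then 1 else 0) * (if a = d then 1 else 0))

theorem sum_mul_standardFourthMoment [CommRing R] (ν : R) (A : Matrix ι ι R) :
    ∑ j, ∑ k, ∑ l, ∑ m, A j k * A l m * standardFourthMoment ν j k l m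
      = A.trace ^ 2 + (A * Aᵀ).trace + (A * A).trace + ν * (A ⊙ A).trace := by
  simp [standardFourthMoment, mul_add, sum_add_distrib, trace, mul_apply, sq, sum_mul_sum,
    ← mul_sum]
  rw [← sum_mul, mul_comm]

theorem prod_count_eq_standardFourthMoment [CommRing R] (m : ι → ℕ → R) (M4 : R)
    (h0 : ∀ i, m i 0 = 1) (h1 : ∀ i, m i 1 = 0) (h2 : ∀ i, m i 2 = 1) (h3 : ∀ i, m i 3 = 0)
    (h4 : ∀ i, m i 4 = M4) (a b c d : ι) :
    ∏ i, m i (({a, b, c, d} : Multiset ι).count i) = standardFourthMoment (M4 - 3) a b c d := by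
  rw [← prod_subset (subset_univ ({a, b, c, d} : Finset ι)) fun i _ hi => by simp_all,
    standardFourthMoment]
  by_cases hab : a = b <;> by_cases hac : a = c <;> by_cases had : a = d <;>
    by_cases hbc : b = c <;> by_cases hbd : b = d <;> by_cases hcd : c = d <;>
    simp_all [Multiset.count_cons, Ne.symm]
  ring

end QuadraticForm

section Moments

open Finset

variable {Ω ι : Type*} [MeasurableSpace Ω] {μ : Measure Ω}

theorem abs_mul_mul_mul_le_sum_pow_four (a b c d : ℝ) :
    |a * b * c * d| ≤ a ^ 4 + b ^ 4 + c ^ 4 + d ^ 4 := by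
  rw [abs_le]
  constructor <;> nlinarith [sq_nonneg (a * b + c * d), sq_nonneg (a * b - c * d),
    sq_nonneg (a ^ 2 - b ^ 2), sq_nonneg (c ^ 2 - d ^ 2)]

theorem integrable_mul_mul_mul_of_integrable_pow_four {f g h k : Ω → ℝ}
    (hf : AEStronglyMeasurable f μ) (hg : AEStronglyMeasurable g μ)
    (hh : AEStronglyMeasurable h μ) (hk : AEStronglyMeasurable k μ)
    (hf4 : Integrable (fun ω => f ω ^ 4) μ) (hg4 : Integrable (fun ω => g ω ^ 4) μ)
    (hh4 : Integrable (fun ω => h ω ^ 4) μ) (hk4 : Integrable (fun ω => k ω ^ 4) μ) :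
    Integrable (fun ω => f ω * g ω * h ω * k ω) μ :=
  (((hf4.add hg4).add hh4).add hk4).mono' (((hf.mul hg).mul hh).mul hk)
    (.of_forall fun _ => abs_mul_mul_mul_le_sum_pow_four _ _ _ _)

theorem integral_pow_eq_zero_of_map_neg {f : Ω → ℝ} (hf : AEMeasurable f μ)
    (hsymm : μ.map f = μ.map (fun ω => -f ω)) {k : ℕ} (hk : Odd k) :
    ∫ ω, f ω ^ k ∂μ = 0 := by
  have hpow : AEStronglyMeasurable (fun x : ℝ => x ^ k) (μ.map f) := by fun_prop
  have : ∫ ω, f ω ^ k ∂μ = -∫ ω, f ω ^ k ∂μ := calc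
    ∫ ω, f ω ^ k ∂μ = ∫ x, x ^ k ∂(μ.map f) := (integral_map hf hpow).symm
    _ = ∫ ω, (-f ω) ^ k ∂μ := by rw [hsymm, integral_map (φ := fun ω => -f ω) hf.neg (by fun_prop)]
    _ = -∫ ω, f ω ^ k ∂μ := by simp_rw [hk.neg_pow, integral_neg]
  linarith

variable [Fintype ι] [DecidableEq ι] {ε : ι → Ω → ℝ}

theorem ProbabilityTheory.iIndepFun.integral_multiset_prod_map (hindep : iIndepFun ε μ)
    (hmeas : ∀ i, AEMeasurable (ε i) μ) (s : Multiset ι) :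
    ∫ ω, (s.map (ε · ω)).prod ∂μ = ∏ i, ∫ ω, ε i ω ^ s.count i ∂μ := by
  simp_rw [prod_map_eq_prod_pow_count]
  exact hindep.integral_fun_prod_comp hmeas fun i => (continuous_pow _).aestronglyMeasurable

theorem integral_mul_mul_mul_eq_standardFourthMoment (hindep : iIndepFun ε μ)
    (hmeas : ∀ i, AEMeasurable (ε i) μ) (hsymm : ∀ i, μ.map (ε i) = μ.map (fun ω => -ε i ω))
    (hvar : ∀ i, ∫ ω, ε i ω ^ 2 ∂μ = 1) {M4 : ℝ} (hM4 : ∀ i, ∫ ω, ε i ω ^ 4 ∂μ = M4)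
    (a b c d : ι) :
    ∫ ω, ε a ω * ε b ω * ε c ω * ε d ω ∂μ = standardFourthMoment (M4 - 3) a b c d := by
  have := hindep.isProbabilityMeasure
  have hodd : ∀ i {k : ℕ}, Odd k → ∫ ω, ε i ω ^ k ∂μ = 0 := fun i _ hk =>
    integral_pow_eq_zero_of_map_neg (hmeas i) (hsymm i) hk
  have hprod := hindep.integral_multiset_prod_map hmeas {a, b, c, d}
  simp only [Multiset.insert_eq_cons, Multiset.map_cons, Multiset.prod_cons,
    Multiset.map_singleton, Multiset.prod_singleton, ← mul_assoc] at hprod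
  rw [hprod]
  exact prod_count_eq_standardFourthMoment (fun i k => ∫ ω, ε i ω ^ k ∂μ) M4 (by simp)
    (fun i => by simpa using hodd i odd_one) hvar (fun i => hodd i (by decide)) hM4 a b c d

theorem integral_sq_dotProduct_mulVec (A : Matrix ι ι ℝ) (ν : ℝ)
    (hint : ∀ a b c d, Integrable (fun ω => ε a ω * ε b ω * ε c ω * ε d ω) μ)
    (hmom : ∀ a b c d, ∫ ω, ε a ω * ε b ω * ε c ω * ε d ω ∂μ = standardFourthMoment ν a b c d) :
    ∫ ω, ((ε · ω) ⬝ᵥ A *ᵥ (ε · ω)) ^ 2 ∂μ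
      = A.trace ^ 2 + (A * Aᵀ).trace + (A * A).trace + ν * (A ⊙ A).trace := by
  simp_rw [sq_dotProduct_mulVec]
  simp (disch := fun_prop) only [integral_finsetSum, integral_const_mul, hmom]
  exact sum_mul_standardFourthMoment ν A

end Moments

theorem expectation_T2_homoscedastic_general
    {Ω : Type*} [MeasurableSpace Ω] (μ : Measure Ω)
    {n p : ℕ}
    (X : Matrix (Fin n) (Fin p) ℝ) (hrank : X.rank = p)
    (P : Matrix (Fin n) (Fin n) ℝ) (hP : P = 1 - X * (Xᵀ * X)⁻¹ * Xᵀ)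
    (ε : Fin n → Ω → ℝ)
    (hmeas : ∀ i, Measurable (ε i))
    (hindep : iIndepFun ε μ)
    (hsymm : ∀ i, μ.map (ε i) = μ.map (fun ω => -ε i ω))
    (hvar : ∀ i, ∫ ω, (ε i ω) ^ 2 ∂μ = 1)
    (hint4 : ∀ i, Integrable (fun ω => (ε i ω) ^ 4) μ)
    (M4 ν4 : ℝ)
    (hM4 : ∀ i, ∫ ω, (ε i ω) ^ 4 ∂μ = M4)
    (hν4 : ν4 = M4 - 3)
    (εhat : Fin n → Ω → ℝ)
    (hεhat : ∀ i ω, εhat i ω = ∑ j, P i j * ε j ω) :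
    (∫ ω, (1 / (n : ℝ)) * (∑ i, εhat i ω ^ 2) ^ 2 ∂μ)
      = (1 / (n : ℝ)) * (((n : ℝ) - p) ^ 2 + 2 * ((n : ℝ) - p)
          + ν4 * (P ⊙ P).trace) := by
  have hU : IsUnit (Xᵀ * X) := isUnit_transpose_mul_self_of_rank_eq (by simpa using hrank)
  have hsymmP : P.IsSymm := hP ▸ isSymm_one.sub isSymm_hat
  have hidem : IsIdempotentElem P := hP ▸ (isIdempotentElem_hat hU).one_sub
  have htrace : P.trace = n - p := by simp [hP, trace_sub, trace_hat hU]
  have hquad : ∀ ω, ∑ i, εhat i ω ^ 2 = (ε · ω) ⬝ᵥ P *ᵥ (ε · ω) := fun ω => by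
    rw [← sum_mulVec_sq_of_isSymm hsymmP hidem]
    simp [hεhat, mulVec, dotProduct]
  have hmoment := integral_mul_mul_mul_eq_standardFourthMoment hindep
    (fun i => (hmeas i).aemeasurable) hsymm hvar hM4
  have hint := fun a b c d => integrable_mul_mul_mul_of_integrable_pow_four
    (hmeas a).aestronglyMeasurable (hmeas b).aestronglyMeasurable
    (hmeas c).aestronglyMeasurable (hmeas d).aestronglyMeasurable
    (hint4 a) (hint4 b) (hint4 c) (hint4 d)
  simp_rw [integral_const_mul, hquad, integral_sq_dotProduct_mulVec P _ hint hmoment,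
    hsymmP.eq, hidem.eq, htrace, hν4]
  ring

/-- Expectation of `T₂ = n⁻¹(Σᵢ ε̂ᵢ²)²` under homoscedasticity: with `P = I − X(XᵀX)⁻¹Xᵀ` the
hat matrix of a full-column-rank design `X` and residuals `ε̂ = Pε`,
`E[n⁻¹(Σᵢ ε̂ᵢ²)²] = n⁻¹((n−p)² + 2(n−p) + ν₄·tr(P∘P))` where `ν₄ = M₄ − 3`. -/
theorem expectation_T2_homoscedastic
    {Ω : Type*} [MeasurableSpace Ω] (μ : Measure Ω) [IsProbabilityMeasure μ]
    {n p : ℕ} (hpn : p < n)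
    (X : Matrix (Fin n) (Fin p) ℝ) (hrank : X.rank = p)
    (P : Matrix (Fin n) (Fin n) ℝ) (hP : P = 1 - X * (Xᵀ * X)⁻¹ * Xᵀ)
    (ε : Fin n → Ω → ℝ)
    (hmeas : ∀ i, Measurable (ε i))
    (hindep : iIndepFun ε μ)
    (hident : ∀ i j, μ.map (ε i) = μ.map (ε j))
    (hsymm : ∀ i, μ.map (ε i) = μ.map (fun ω => -ε i ω))
    (hvar : ∀ i, ∫ ω, (ε i ω) ^ 2 ∂μ = 1)
    (hint4 : ∀ i, Integrable (fun ω => (ε i ω) ^ 4) μ)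
    (M4 ν4 : ℝ)
    (hM4 : ∀ i, ∫ ω, (ε i ω) ^ 4 ∂μ = M4)
    (hν4 : ν4 = M4 - 3)
    (εhat : Fin n → Ω → ℝ)
    (hεhat : ∀ i ω, εhat i ω = ∑ j, P i j * ε j ω) :
    (∫ ω, (1 / (n : ℝ)) * (∑ i, εhat i ω ^ 2) ^ 2 ∂μ)
      = (1 / (n : ℝ)) * (((n : ℝ) - p) ^ 2 + 2 * ((n : ℝ) - p)
          + ν4 * (P ⊙ P).trace) :=
  expectation_T2_homoscedastic_general μ X hrank P hP ε hmeas hindep hsymm hvar hint4 M4 ν4 hM4 hν4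
    εhat hεhat
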